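/- arXiv:1705.09060 — 5 statements merged into one kernel-verified Lean document; each statement's English description precedes it below -/
import Mathlib

section
/- The function p₅(r,t) = (4πt)^{-5/2} · [(r/sinh r)² + 2t(r cosh r − sinh r)/sinh³ r] · e^{-(r²/(4t) + 4t)} satisfies the radial heat equation on H⁵: ∂_t p = ∂_r² p + 4 coth(r) ∂_r p for all r > 0, t > 0. -/
/-!
Write `p₅ = (4πt)^(-5/2) (a(r) + 2t b(r)) exp(-(r²/(4t) + 4t))` with `a = (r / sinh r)²` and
`b = (r cosh r - sinh r) / sinh³ r`. Differentiating the Gaussian factor, the defect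
`∂ₜp - Lp` of the heat equation for `L = ∂ᵣ² + 4 coth r ∂ᵣ` is `p`'s prefactor times a polynomial in
`t` (after multiplying by `t`); its coefficients vanish by three ordinary differential identities
in `r`: `r a' + 2r coth r · a = 2a`, `(L + 4) a = 2(r b' + (2r coth r - 1) b)` and `(L + 4) b = 0`.
-/

open Real Filter Topology

noncomputable def heatAnsatz (a b : ℝ → ℝ) (r t : ℝ) : ℝ :=
  (4 * π * t) ^ (-(5 : ℝ) / 2) * (a r + 2 * t * b r) * exp (-(r ^ 2 / (4 * t) + 4 * t))

lemma hasDerivAt_heatAnsatz_time (a b : ℝ → ℝ) (r : ℝ) {t : ℝ} (ht : t ≠ 0) :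
    HasDerivAt (heatAnsatz a b r)
      ((4 * π * t) ^ (-(5 : ℝ) / 2) *
        ((r ^ 2 / (4 * t ^ 2) - 4 - 5 / (2 * t)) * (a r + 2 * t * b r) + 2 * b r) *
        exp (-(r ^ 2 / (4 * t) + 4 * t))) t := by
  have h4πt : 4 * π * t ≠ 0 := by positivity
  have hpow : HasDerivAt (fun s : ℝ => (4 * π * s) ^ (-(5 : ℝ) / 2))
      (-(5 : ℝ) / 2 * (4 * π * t) ^ (-(5 : ℝ) / 2 - 1) * (4 * π)) t :=
    (hasDerivAt_rpow_const (Or.inl h4πt)).comp t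
      (by simpa using (hasDerivAt_id t).const_mul (4 * π))
  have hlin : HasDerivAt (fun s : ℝ => a r + 2 * s * b r) (2 * b r) t := by
    simpa using (((hasDerivAt_id t).const_mul 2).mul_const (b r)).const_add (a r)
  have hexp := ((((hasDerivAt_id t).const_mul 4).inv (by positivity)).const_mul (r ^ 2)
    |>.add ((hasDerivAt_id t).const_mul 4)).neg.exp
  refine ((hpow.mul hlin).mul hexp).congr_deriv ?_
  simp only [Pi.mul_apply, Pi.add_apply, Pi.neg_apply, Pi.inv_apply, id, rpow_sub_one h4πt]
  field_simp
  ring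

lemma hasDerivAt_heatAnsatz_radial {a a' b b' : ℝ → ℝ} {x t : ℝ}
    (ha : HasDerivAt a (a' x) x) (hb : HasDerivAt b (b' x) x) :
    HasDerivAt (heatAnsatz a b · t)
      (heatAnsatz a' b' x t - x / (2 * t) * heatAnsatz a b x t) x := by
  have hexp := (((hasDerivAt_pow 2 x).div_const (4 * t)).add_const (4 * t)).neg.exp
  refine (((ha.add (hb.const_mul (2 * t))).const_mul
    ((4 * π * t) ^ (-(5 : ℝ) / 2))).mul hexp).congr_deriv ?_
  simp only [heatAnsatz, Pi.add_apply, Pi.neg_apply]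
  field_simp
  ring

theorem heatAnsatz_satisfies_radialHeatEq {a a' b b' : ℝ → ℝ} {a'' b'' r t : ℝ} (ht : t ≠ 0)
    (ha : ∀ᶠ x in 𝓝 r, HasDerivAt a (a' x) x) (hb : ∀ᶠ x in 𝓝 r, HasDerivAt b (b' x) x)
    (ha' : HasDerivAt a' a'' r) (hb' : HasDerivAt b' b'' r)
    (h₀ : r * a' r + 2 * r * (cosh r / sinh r) * a r = 2 * a r)
    (h₁ : a'' + 4 * (cosh r / sinh r) * a' r + 4 * a r =
      2 * (r * b' r + (2 * r * (cosh r / sinh r) - 1) * b r))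
    (h₂ : b'' + 4 * (cosh r / sinh r) * b' r + 4 * b r = 0) :
    deriv (heatAnsatz a b r) t =
      deriv (fun x => deriv (heatAnsatz a b · t) x) r +
        4 * (cosh r / sinh r) * deriv (heatAnsatz a b · t) r := by
  have hfirst : ∀ᶠ x in 𝓝 r, HasDerivAt (heatAnsatz a b · t)
      (heatAnsatz a' b' x t - x / (2 * t) * heatAnsatz a b x t) x :=
    (ha.and hb).mono fun x h => hasDerivAt_heatAnsatz_radial h.1 h.2
  have hsecond : HasDerivAt (fun x => heatAnsatz a' b' x t - x / (2 * t) * heatAnsatz a b x t)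
      (heatAnsatz (fun _ => a'') (fun _ => b'') r t - r / (2 * t) * heatAnsatz a' b' r t -
        (1 / (2 * t) * heatAnsatz a b r t +
          r / (2 * t) * (heatAnsatz a' b' r t - r / (2 * t) * heatAnsatz a b r t))) r :=
    (hasDerivAt_heatAnsatz_radial (a' := fun _ => a'') (b' := fun _ => b'') ha' hb').sub
      (((hasDerivAt_id r).div_const (2 * t)).mul hfirst.self_of_nhds)
  rw [(hasDerivAt_heatAnsatz_time a b r ht).deriv, hfirst.self_of_nhds.deriv,
    EventuallyEq.deriv_eq (hfirst.mono fun x h => h.deriv), hsecond.deriv]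
  generalize cosh r / sinh r = k at *
  simp only [heatAnsatz]
  field_simp
  -- `h₀`, `h₁`, `h₂` are the coefficients of `t`, `t²`, `t³` in the cleared defect
  linear_combination
    (4 * π * t) ^ (-(5 / 2) : ℝ) * (16 * t * h₀ - 16 * t ^ 2 * h₁ - 32 * t ^ 3 * h₂)

noncomputable def leadProfile (r : ℝ) : ℝ := (r / sinh r) ^ 2

noncomputable def leadProfileDeriv (r : ℝ) : ℝ :=
  2 * r / sinh r ^ 2 - 2 * r ^ 2 * cosh r / sinh r ^ 3

noncomputable def corrProfile (r : ℝ) : ℝ := (r * cosh r - sinh r) / sinh r ^ 3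

noncomputable def corrProfileDeriv (r : ℝ) : ℝ :=
  r / sinh r ^ 2 - 3 * r * cosh r ^ 2 / sinh r ^ 4 + 3 * cosh r / sinh r ^ 3

lemma hasDerivAt_leadProfile {x : ℝ} (hx : x ≠ 0) :
    HasDerivAt leadProfile (leadProfileDeriv x) x := by
  have hs : sinh x ≠ 0 := sinh_ne_zero.2 hx
  refine (((hasDerivAt_id x).div (hasDerivAt_sinh x) hs).pow 2).congr_deriv ?_
  simp only [leadProfileDeriv, Pi.div_apply, id_eq, Nat.reduceSub, pow_one]
  field_simp
  ring

lemma hasDerivAt_leadProfileDeriv {x : ℝ} (hx : x ≠ 0) :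
    HasDerivAt leadProfileDeriv (2 / sinh x ^ 2 - 8 * x * cosh x / sinh x ^ 3
      - 2 * x ^ 2 / sinh x ^ 2 + 6 * x ^ 2 * cosh x ^ 2 / sinh x ^ 4) x := by
  have hs : sinh x ≠ 0 := sinh_ne_zero.2 hx
  refine ((((hasDerivAt_id x).const_mul 2).div ((hasDerivAt_sinh x).pow 2) (pow_ne_zero 2 hs)).sub
    ((((hasDerivAt_pow 2 x).const_mul 2).mul (hasDerivAt_cosh x)).div ((hasDerivAt_sinh x).pow 3)
      (pow_ne_zero 3 hs))).congr_deriv ?_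
  simp only [Pi.pow_apply, Pi.mul_apply, id_eq]
  field_simp
  ring

lemma hasDerivAt_corrProfile {x : ℝ} (hx : x ≠ 0) :
    HasDerivAt corrProfile (corrProfileDeriv x) x := by
  have hs : sinh x ≠ 0 := sinh_ne_zero.2 hx
  refine ((((hasDerivAt_id x).mul (hasDerivAt_cosh x)).sub (hasDerivAt_sinh x)).div
    ((hasDerivAt_sinh x).pow 3) (pow_ne_zero 3 hs)).congr_deriv ?_
  simp only [corrProfileDeriv, Pi.pow_apply, Pi.mul_apply, Pi.sub_apply, id_eq]
  field_simp
  ring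

lemma hasDerivAt_corrProfileDeriv {x : ℝ} (hx : x ≠ 0) :
    HasDerivAt corrProfileDeriv (4 / sinh x ^ 2 - 8 * x * cosh x / sinh x ^ 3
      - 12 * cosh x ^ 2 / sinh x ^ 4 + 12 * x * cosh x ^ 3 / sinh x ^ 5) x := by
  have hs : sinh x ≠ 0 := sinh_ne_zero.2 hx
  refine ((((hasDerivAt_id x).div ((hasDerivAt_sinh x).pow 2) (pow_ne_zero 2 hs)).sub
    ((((hasDerivAt_id x).const_mul 3).mul ((hasDerivAt_cosh x).pow 2)).div
      ((hasDerivAt_sinh x).pow 4) (pow_ne_zero 4 hs))).add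
    (((hasDerivAt_cosh x).const_mul 3).div ((hasDerivAt_sinh x).pow 3)
      (pow_ne_zero 3 hs))).congr_deriv ?_
  simp only [Pi.pow_apply, Pi.mul_apply, id_eq]
  field_simp
  ring

theorem stmt_2 (r t : ℝ) (hr : 0 < r) (ht : 0 < t) :
    let p : ℝ → ℝ → ℝ := fun r t =>
      (4 * π * t) ^ (-(5 : ℝ) / 2) *
        ((r / Real.sinh r) ^ 2 +
          2 * t * (r * Real.cosh r - Real.sinh r) / (Real.sinh r) ^ 3) *
        Real.exp (-(r ^ 2 / (4 * t) + 4 * t))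
    deriv (fun t' => p r t') t =
      deriv (fun r' => deriv (fun r'' => p r'' t) r') r
        + 4 * (Real.cosh r / Real.sinh r) * deriv (fun r' => p r' t) r := by
  intro p
  have hp : p = heatAnsatz leadProfile corrProfile := by
    funext x s
    simp only [p, heatAnsatz, leadProfile, corrProfile, mul_div_assoc]
  have hnear : ∀ᶠ x in 𝓝 r, x ≠ 0 := eventually_ne_nhds hr.ne'
  rw [hp]
  refine heatAnsatz_satisfies_radialHeatEq ht.ne' (hnear.mono fun _ => hasDerivAt_leadProfile)
    (hnear.mono fun _ => hasDerivAt_corrProfile) (hasDerivAt_leadProfileDeriv hr.ne')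
    (hasDerivAt_corrProfileDeriv hr.ne') ?_ ?_ ?_ <;>
  · simp only [leadProfile, leadProfileDeriv, corrProfile, corrProfileDeriv]
    field_simp
    ring
end

section
/- If p(r,t) satisfies ∂_t p = ∂_r² p + (n-1) coth(r) ∂_r p (the radial heat equation on H^n), then q(r,t) := e^{-nt} (1/sinh r) ∂_r p(r,t) satisfies ∂_t q = ∂_r² q + (n+1) coth(r) ∂_r q, the radial heat equation on H^{n+2}. -/
open Real

noncomputable def pd (g : ℝ × ℝ → ℝ) (v : ℝ × ℝ) : ℝ × ℝ → ℝ := fun x => fderiv ℝ g x v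

lemma pd_contDiff {g : ℝ × ℝ → ℝ} (hg : ContDiff ℝ (⊤ : ℕ∞) g) (v : ℝ × ℝ) :
    ContDiff ℝ (⊤ : ℕ∞) (pd g v) :=
  (hg.fderiv_right (by simp)).clm_apply contDiff_const

lemma hasDerivAt_fst {g : ℝ × ℝ → ℝ} (hg : ContDiff ℝ (⊤ : ℕ∞) g) (r t : ℝ) :
    HasDerivAt (fun r' => g (r', t)) (pd g (1, 0) (r, t)) r := by
  have h1 : HasFDerivAt g (fderiv ℝ g (r, t)) (r, t) :=
    (hg.differentiable (by simp) (r, t)).hasFDerivAt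
  have h2 : HasDerivAt (fun r' : ℝ => ((r' : ℝ), t)) ((1 : ℝ), (0 : ℝ)) r :=
    (hasDerivAt_id r).prodMk (hasDerivAt_const r t)
  exact h1.comp_hasDerivAt r h2

lemma hasDerivAt_snd {g : ℝ × ℝ → ℝ} (hg : ContDiff ℝ (⊤ : ℕ∞) g) (r t : ℝ) :
    HasDerivAt (fun t' => g (r, t')) (pd g (0, 1) (r, t)) t := by
  have h1 : HasFDerivAt g (fderiv ℝ g (r, t)) (r, t) :=
    (hg.differentiable (by simp) (r, t)).hasFDerivAt
  have h2 : HasDerivAt (fun t' : ℝ => ((r : ℝ), t')) ((0 : ℝ), (1 : ℝ)) t :=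
    (hasDerivAt_const t r).prodMk (hasDerivAt_id t)
  exact h1.comp_hasDerivAt t h2

lemma pd_comm {g : ℝ × ℝ → ℝ} (hg : ContDiff ℝ (⊤ : ℕ∞) g) (v w x : ℝ × ℝ) :
    pd (pd g v) w x = pd (pd g w) v x := by
  have hd : Differentiable ℝ (fderiv ℝ g) := (hg.fderiv_right (m := (⊤ : ℕ∞)) (by simp)).differentiable (by simp)
  have h1 : ∀ (u w' : ℝ × ℝ), pd (pd g u) w' x = (fderiv ℝ (fderiv ℝ g) x w') u := by
    intro u w'
    have h := fderiv_clm_apply (hd x) (differentiableAt_const u)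
    have hpd : pd (pd g u) w' x = fderiv ℝ (fun y => (fderiv ℝ g y) u) x w' := rfl
    rw [hpd, h]
    simp
  rw [h1 v w, h1 w v]
  exact second_derivative_symmetric (fun y => (hg.differentiable (by simp) y).hasFDerivAt)
    (hd x).hasFDerivAt w v

theorem stmt_3 (n : ℕ) (hn : 1 ≤ n) (p : ℝ → ℝ → ℝ)
    (hp : ContDiff ℝ (⊤ : ℕ∞) (fun q : ℝ × ℝ => p q.1 q.2))
    (hheat : ∀ r > (0:ℝ), ∀ t > (0:ℝ),
      deriv (fun t' => p r t') t =
        deriv (fun r' => deriv (fun r'' => p r'' t) r') r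
          + ((n : ℝ) - 1) * (Real.cosh r / Real.sinh r) * deriv (fun r' => p r' t) r) :
    let q : ℝ → ℝ → ℝ := fun r t =>
      Real.exp (-(n : ℝ) * t) * (1 / Real.sinh r) * deriv (fun r' => p r' t) r
    ∀ r > (0:ℝ), ∀ t > (0:ℝ),
      deriv (fun t' => q r t') t =
        deriv (fun r' => deriv (fun r'' => q r'' t) r') r
          + ((n : ℝ) + 1) * (Real.cosh r / Real.sinh r) * deriv (fun r' => q r' t) r := by
  intro q r hr t ht
  have hs : Real.sinh r ≠ 0 := (Real.sinh_pos_iff.2 hr).ne'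
  set F : ℝ × ℝ → ℝ := fun x => p x.1 x.2 with hF
  have hpF : ContDiff ℝ (⊤ : ℕ∞) F := hp
  set a := pd F (1, 0) with ha
  set b := pd a (1, 0) with hb
  set d3 := pd b (1, 0) with hd3
  set F2 := pd F (0, 1) with hF2d
  set at' := pd a (0, 1) with hat'
  have hca : ContDiff ℝ (⊤ : ℕ∞) a := pd_contDiff hpF _
  have hcb : ContDiff ℝ (⊤ : ℕ∞) b := pd_contDiff hca _
  have hcF2 : ContDiff ℝ (⊤ : ℕ∞) F2 := pd_contDiff hpF _
  have h1 : ∀ x y : ℝ, HasDerivAt (fun x' => p x' y) (a (x, y)) x :=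
    fun x y => hasDerivAt_fst hpF x y
  have h2 : ∀ x y : ℝ, HasDerivAt (fun y' => p x y') (F2 (x, y)) y :=
    fun x y => hasDerivAt_snd hpF x y
  have h1' : ∀ x y : ℝ, HasDerivAt (fun x' => a (x', y)) (b (x, y)) x :=
    fun x y => hasDerivAt_fst hca x y
  have h1'' : ∀ x y : ℝ, HasDerivAt (fun x' => b (x', y)) (d3 (x, y)) x :=
    fun x y => hasDerivAt_fst hcb x y
  have hta : ∀ x y : ℝ, HasDerivAt (fun y' => a (x, y')) (at' (x, y)) y :=
    fun x y => hasDerivAt_snd hca x y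
  have hF2r : ∀ x y : ℝ, HasDerivAt (fun x' => F2 (x', y)) (at' (x, y)) x := by
    intro x y
    have h := hasDerivAt_fst hcF2 x y
    rwa [hF2d, pd_comm hpF (0, 1) (1, 0) (x, y)] at h
  -- rewrite q in terms of a
  have hq : ∀ x y : ℝ, q x y = Real.exp (-(n : ℝ) * y) * (1 / Real.sinh x) * a (x, y) := by
    intro x y
    show Real.exp (-(n : ℝ) * y) * (1 / Real.sinh x) * deriv (fun x' => p x' y) x
      = Real.exp (-(n : ℝ) * y) * (1 / Real.sinh x) * a (x, y)
    rw [(h1 x y).deriv]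
  have e1 : (fun t' => q r t')
      = fun t' => Real.exp (-(n : ℝ) * t') * (1 / Real.sinh r) * a (r, t') :=
    funext fun y => hq r y
  have e2 : (fun x => q x t)
      = fun x => Real.exp (-(n : ℝ) * t) * (1 / Real.sinh x) * a (x, t) :=
    funext fun x => hq x t
  rw [e1, e2]
  -- time derivative
  have hE : HasDerivAt (fun y : ℝ => Real.exp (-(n : ℝ) * y))
      (Real.exp (-(n : ℝ) * t) * (-(n : ℝ) * 1)) t :=
    ((hasDerivAt_id' (x := t)).const_mul (-(n : ℝ))).exp
  have hLHS : HasDerivAt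
      (fun t' => Real.exp (-(n : ℝ) * t') * (1 / Real.sinh r) * a (r, t'))
      ((Real.exp (-(n : ℝ) * t) * (-(n : ℝ) * 1) * (1 / Real.sinh r)) * a (r, t)
        + (Real.exp (-(n : ℝ) * t) * (1 / Real.sinh r)) * at' (r, t)) t :=
    (hE.mul_const _).mul (hta r t)
  rw [hLHS.deriv]
  -- space derivative of q
  have hinv : ∀ x : ℝ, Real.sinh x ≠ 0 →
      HasDerivAt (fun x' => 1 / Real.sinh x') (-Real.cosh x / Real.sinh x ^ 2) x := by
    intro x hx
    have h := (Real.hasDerivAt_sinh x).inv hx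
    simpa [one_div, Pi.inv_def] using h
  have hqr : ∀ x : ℝ, 0 < x →
      HasDerivAt (fun x' => Real.exp (-(n : ℝ) * t) * (1 / Real.sinh x') * a (x', t))
        ((Real.exp (-(n : ℝ) * t) * (-Real.cosh x / Real.sinh x ^ 2)) * a (x, t)
          + (Real.exp (-(n : ℝ) * t) * (1 / Real.sinh x)) * b (x, t)) x := by
    intro x hx
    exact (((hinv x (Real.sinh_pos_iff.2 hx).ne').const_mul _)).mul (h1' x t)
  have hev : (fun x => deriv
        (fun x' => Real.exp (-(n : ℝ) * t) * (1 / Real.sinh x') * a (x', t)) x)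
      =ᶠ[nhds r] fun x =>
        (Real.exp (-(n : ℝ) * t) * (-Real.cosh x / Real.sinh x ^ 2)) * a (x, t)
          + (Real.exp (-(n : ℝ) * t) * (1 / Real.sinh x)) * b (x, t) := by
    filter_upwards [eventually_gt_nhds hr] with x hx
    exact (hqr x hx).deriv
  rw [Filter.EventuallyEq.deriv_eq hev, (hqr r hr).deriv]
  -- second space derivative
  have hs2 : HasDerivAt (fun x => Real.sinh x ^ 2) (2 * Real.sinh r * Real.cosh r) r := by
    have h := (Real.hasDerivAt_sinh r).pow 2
    norm_num at h
    exact h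
  have hA : HasDerivAt (fun x => -Real.cosh x / Real.sinh x ^ 2)
      ((-Real.sinh r * Real.sinh r ^ 2 - -Real.cosh r * (2 * Real.sinh r * Real.cosh r))
        / (Real.sinh r ^ 2) ^ 2) r :=
    (Real.hasDerivAt_cosh r).neg.div hs2 (pow_ne_zero 2 hs)
  have hG : HasDerivAt (fun x =>
        (Real.exp (-(n : ℝ) * t) * (-Real.cosh x / Real.sinh x ^ 2)) * a (x, t)
          + (Real.exp (-(n : ℝ) * t) * (1 / Real.sinh x)) * b (x, t))
      (((Real.exp (-(n : ℝ) * t) *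
          ((-Real.sinh r * Real.sinh r ^ 2 - -Real.cosh r * (2 * Real.sinh r * Real.cosh r))
            / (Real.sinh r ^ 2) ^ 2)) * a (r, t)
        + (Real.exp (-(n : ℝ) * t) * (-Real.cosh r / Real.sinh r ^ 2)) * b (r, t))
        + ((Real.exp (-(n : ℝ) * t) * (-Real.cosh r / Real.sinh r ^ 2)) * b (r, t)
          + (Real.exp (-(n : ℝ) * t) * (1 / Real.sinh r)) * d3 (r, t))) r :=
    ((hA.const_mul _).mul (h1' r t)).add
      (((hinv r hs).const_mul _).mul (h1'' r t))
  rw [hG.deriv]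
  -- differentiated heat equation
  have heq : ∀ x : ℝ, 0 < x →
      F2 (x, t) = b (x, t) + ((n : ℝ) - 1) * (Real.cosh x / Real.sinh x) * a (x, t) := by
    intro x hx
    have h := hheat x hx t ht
    have hmid : (fun x' => deriv (fun x'' => p x'' t) x') = fun x' => a (x', t) :=
      funext fun x' => (h1 x' t).deriv
    rw [(h2 x t).deriv, hmid, (h1' x t).deriv, (h1 x t).deriv] at h
    exact h
  have hkey : at' (r, t) = d3 (r, t)
      + ((((n : ℝ) - 1) * ((Real.sinh r * Real.sinh r - Real.cosh r * Real.cosh r)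
            / Real.sinh r ^ 2)) * a (r, t)
        + (((n : ℝ) - 1) * (Real.cosh r / Real.sinh r)) * b (r, t)) := by
    have hev2 : (fun x => F2 (x, t)) =ᶠ[nhds r]
        fun x => b (x, t) + ((n : ℝ) - 1) * (Real.cosh x / Real.sinh x) * a (x, t) := by
      filter_upwards [eventually_gt_nhds hr] with x hx
      exact heq x hx
    have hR : HasDerivAt
        (fun x => b (x, t) + ((n : ℝ) - 1) * (Real.cosh x / Real.sinh x) * a (x, t))
        (d3 (r, t)
          + ((((n : ℝ) - 1) * ((Real.sinh r * Real.sinh r - Real.cosh r * Real.cosh r)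
                / Real.sinh r ^ 2)) * a (r, t)
            + (((n : ℝ) - 1) * (Real.cosh r / Real.sinh r)) * b (r, t))) r :=
      (h1'' r t).add
        ((((Real.hasDerivAt_cosh r).div (Real.hasDerivAt_sinh r) hs).const_mul _).mul (h1' r t))
    rw [← (hF2r r t).deriv, Filter.EventuallyEq.deriv_eq hev2, hR.deriv]
  rw [hkey]
  field_simp
  ring
end

section
/- For positive integers s ≥ 1 and real x > 0, ∫_x^∞ u^{-(s+1/2)} e^{-u} du = e^{-x}/(2s−1)!! · Σ_{r=1}^{s−1} 2^r (−1)^{r−1} (2s−2r−1)!! x^{-(s−r)−1/2} + ((−1)^{s−1} 2^s/(2s−1)!!) [x^{-1/2} e^{-x} − ∫_x^∞ u^{-1/2} e^{-u} du]. -/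
open Real MeasureTheory Finset Nat

/-!
Integration by parts gives `a * I (a + 1) = x ^ (-a) * e ^ (-x) - I a` for
`I a = ∫_x^∞ u ^ (-a) e ^ (-u) du`. At `a = s + 1/2`, using `(2s+1)‼ = (2s+1) (2s-1)‼`, the
quantity `(2s-1)‼ I (s + 1/2) / (-2) ^ s` drops by `(2s-1)‼ x ^ (-(s + 1/2)) e ^ (-x) / (-2) ^ s`
from `s` to `s + 1`, so it telescopes down to `I (1/2)`; reversing the resulting sum (`r = s - k`)
gives the formula.
-/


open Filter Asymptotics in
theorem integrableOn_rpow_mul_exp_neg_Ioi (a : ℝ) {x : ℝ} (hx : 0 < x) :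
    IntegrableOn (fun u : ℝ => u ^ a * exp (-u)) (Set.Ioi x) := by
  refine integrable_of_isBigO_exp_neg one_half_pos ?_ ?_
  · intro u hu
    have hu0 : u ≠ 0 := (hx.trans_le hu).ne'
    exact ((continuousAt_id.rpow_const (Or.inl hu0)).mul
      (continuous_exp.comp continuous_neg).continuousAt).continuousWithinAt
  · have hdecay : (fun u : ℝ => u ^ a * exp (-(1 / 2) * u)) =O[atTop] fun _ => (1 : ℝ) :=
      (tendsto_rpow_mul_exp_neg_mul_atTop_nhds_zero a _ one_half_pos).isBigO_one ℝ
    refine (hdecay.mul (isBigO_refl (fun u : ℝ => exp (-(1 / 2) * u)) atTop)).congr' ?_ ?_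
    · filter_upwards with u
      rw [mul_assoc, ← exp_add]
      ring_nf
    · simp

theorem mul_integral_rpow_neg_add_one_mul_exp_neg (a : ℝ) {x : ℝ} (hx : 0 < x) :
    a * ∫ u in Set.Ioi x, u ^ (-(a + 1)) * exp (-u)
      = x ^ (-a) * exp (-x) - ∫ u in Set.Ioi x, u ^ (-a) * exp (-u) := by
  have hderiv : ∀ u ∈ Set.Ici x, HasDerivAt (fun u => u ^ (-a) * exp (-u))
      (-a * (u ^ (-(a + 1)) * exp (-u)) - u ^ (-a) * exp (-u)) u := by
    intro u hu
    have hpow := hasDerivAt_rpow_const (p := -a) (Or.inl (hx.trans_le hu).ne')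
    have hexp := (hasDerivAt_neg u).exp
    refine (hpow.mul hexp).congr_deriv ?_
    rw [show -a - 1 = -(a + 1) by ring]
    ring
  have hdecay : Filter.Tendsto (fun u : ℝ => u ^ (-a) * exp (-u)) Filter.atTop (nhds 0) := by
    simpa using tendsto_rpow_mul_exp_neg_mul_atTop_nhds_zero (-a) 1 one_pos
  have hint₁ := integrableOn_rpow_mul_exp_neg_Ioi (-(a + 1)) hx
  have hint₀ := integrableOn_rpow_mul_exp_neg_Ioi (-a) hx
  have hftc := integral_Ioi_of_hasDerivAt_of_tendsto' hderiv
    ((hint₁.const_mul (-a)).sub hint₀) hdecay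
  rw [integral_sub (hint₁.const_mul _) hint₀, integral_const_mul] at hftc
  linarith

theorem Nat.doubleFactorial_two_mul_add_one (s : ℕ) :
    (2 * s + 1)‼ = (2 * s + 1) * (2 * s - 1)‼ := by
  cases s with
  | zero => rfl
  | succ s => rw [show 2 * (s + 1) + 1 = 2 * s + 1 + 2 by ring, doubleFactorial_add_two]; rfl

theorem doubleFactorial_mul_integral_rpow_neg_add_half_mul_exp_neg (s : ℕ) {x : ℝ} (hx : 0 < x) :
    ((2 * s - 1)‼ : ℝ) * ∫ u in Set.Ioi x, u ^ (-((s : ℝ) + 1 / 2)) * exp (-u)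
      = (-2) ^ s * ((∫ u in Set.Ioi x, u ^ (-(1 / 2 : ℝ)) * exp (-u))
          - ∑ k ∈ range s,
              (-1 / 2) ^ k * ((2 * k - 1)‼ : ℝ) * (x ^ (-((k : ℝ) + 1 / 2)) * exp (-x))) := by
  induction s with
  | zero => simp
  | succ s ih =>
    have hrec := mul_integral_rpow_neg_add_one_mul_exp_neg ((s : ℝ) + 1 / 2) hx
    have hD : ((2 * (s + 1) - 1)‼ : ℝ) = (2 * s + 1) * (2 * s - 1)‼ := by
      rw [show 2 * (s + 1) - 1 = 2 * s + 1 by omega, doubleFactorial_two_mul_add_one]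
      push_cast; ring
    have hexponent : -(((s + 1 : ℕ) : ℝ) + 1 / 2) = -((s : ℝ) + 1 / 2 + 1) := by push_cast; ring
    have hpow : (-2 : ℝ) ^ s * (-1 / 2) ^ s = 1 := by rw [← mul_pow]; norm_num
    rw [sum_range_succ, hD, hexponent]
    linear_combination (2 * ((2 * s - 1)‼ : ℝ)) * hrec - 2 * ih
      - 2 * ((2 * s - 1)‼ : ℝ) * (x ^ (-((s : ℝ) + 1 / 2)) * exp (-x)) * hpow

theorem Finset.sum_range_eq_add_sum_Icc_reflect {M : Type*} [AddCommMonoid M] (f : ℕ → M)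
    {s : ℕ} (hs : 1 ≤ s) : ∑ k ∈ range s, f k = f 0 + ∑ r ∈ Icc 1 (s - 1), f (s - r) := by
  obtain ⟨t, rfl⟩ := Nat.exists_eq_add_of_le' hs
  rw [sum_range_succ', add_comm, Nat.add_sub_cancel]
  congr 1
  refine sum_nbij' (fun k => t - k) (fun r => t - r) ?_ ?_ ?_ ?_ ?_ <;> intro k hk <;>
    simp only [mem_range, mem_Icc] at hk
  all_goals first | simp only [mem_range, mem_Icc]; omega | omega | congr 1; omega

theorem neg_neg_two_pow {r : ℕ} (hr : 1 ≤ r) : -(-2 : ℝ) ^ r = 2 ^ r * (-1) ^ (r - 1) := by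
  obtain ⟨t, rfl⟩ := Nat.exists_eq_add_of_le' hr
  rw [Nat.add_sub_cancel, neg_pow, pow_succ]
  ring

theorem neg_two_pow_mul_neg_half_pow_sub {r s : ℕ} (hrs : r ≤ s) :
    (-2 : ℝ) ^ s * (-1 / 2) ^ (s - r) = (-2) ^ r := by
  rw [← Nat.sub_add_cancel hrs, pow_add, Nat.add_sub_cancel, mul_right_comm, ← mul_pow]
  norm_num

theorem stmt_11 (s : ℕ) (hs : 1 ≤ s) (x : ℝ) (hx : 0 < x) :
    ∫ u in Set.Ioi x, u ^ (-((s : ℝ) + 1/2)) * Real.exp (-u) =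
      Real.exp (-x) / ((2 * s - 1)‼ : ℝ) *
        ∑ r ∈ Finset.Icc 1 (s - 1),
          (2 : ℝ) ^ r * (-1 : ℝ) ^ (r - 1) * ((2 * s - 2 * r - 1)‼ : ℝ)
            * x ^ (-((s : ℝ) - (r : ℝ)) - 1/2)
      + ((-1 : ℝ) ^ (s - 1) * 2 ^ s / ((2 * s - 1)‼ : ℝ)) *
          (x ^ (-(1 : ℝ)/2) * Real.exp (-x)
            - ∫ u in Set.Ioi x, u ^ (-(1 : ℝ)/2) * Real.exp (-u)) := by
  have hclosed := doubleFactorial_mul_integral_rpow_neg_add_half_mul_exp_neg s hx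
  have hterm : ∀ r ∈ Icc 1 (s - 1),
      (-2 : ℝ) ^ s * ((-1 / 2) ^ (s - r) * ((2 * (s - r) - 1)‼ : ℝ)
        * (x ^ (-(((s - r : ℕ) : ℝ) + 1 / 2)) * exp (-x)))
      = -(exp (-x) * ((2 : ℝ) ^ r * (-1 : ℝ) ^ (r - 1) * ((2 * s - 2 * r - 1)‼ : ℝ)
            * x ^ (-((s : ℝ) - (r : ℝ)) - 1/2))) := by
    intro r hr
    rw [mem_Icc] at hr
    rw [Nat.cast_sub (by omega : r ≤ s), show 2 * (s - r) - 1 = 2 * s - 2 * r - 1 by omega,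
      show -((s : ℝ) - r + 1 / 2) = -((s : ℝ) - r) - 1 / 2 by ring]
    linear_combination (((2 * s - 2 * r - 1)‼ : ℝ) * x ^ (-((s : ℝ) - r) - 1 / 2) * exp (-x)) *
      (neg_two_pow_mul_neg_half_pow_sub (by omega : r ≤ s) - neg_neg_two_pow hr.1)
  rw [sum_range_eq_add_sum_Icc_reflect _ hs, mul_sub, mul_add, mul_sum, sum_congr rfl hterm,
    sum_neg_distrib, ← mul_sum] at hclosed
  simp only [pow_zero, mul_zero, Nat.zero_sub, doubleFactorial, Nat.cast_one, Nat.cast_zero,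
    zero_add, one_mul] at hclosed
  have hD : ((2 * s - 1)‼ : ℝ) ≠ 0 := by positivity
  rw [div_mul_eq_mul_div, div_mul_eq_mul_div, ← add_div, eq_div_iff hD, neg_div]
  linear_combination hclosed + (x ^ (-(1 / 2 : ℝ)) * exp (-x)
    - ∫ u in Set.Ioi x, u ^ (-(1 / 2 : ℝ)) * exp (-u)) * neg_neg_two_pow hs
end

section
/- Define Φ(r) = −((n−1)/(4r²))[(n−3)(1 − r² coth² r) − 2r²] for r > 0 and integer n ≥ 2. Then: (i) for n = 2, sup_{r>0} Φ(r) = 1/3 and inf_{r>0} Φ(r) = 1/4; (ii) for n = 3, Φ(r) = 1 for all r > 0; (iii) for n > 3, sup_{r>0} Φ(r) = (n−1)²/4 and inf_{r>0} Φ(r) = n(n−1)/6. -/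
/-!
Since `coth² r = 1 + 1 / sinh² r`, for `r > 0` we have `Φ(r) = (n-1)/4 · (n-1 - (n-3) Q(r))` with
`Q(r) = 1/r² - 1/sinh² r`: an affine function of `Q`, increasing for `n < 3`, constant for `n = 3`,
decreasing for `n > 3`. On `(0, ∞)`, `Q` lies between `max(0, (3 - r²)/9)` and `1/3`, so it tends
to `1/3` as `r → 0⁺` and to `0` as `r → ∞`, and these are its supremum and infimum.
The bound `Q ≤ 1/3` reads `sinh² r (3 - r²) ≤ 3 r²`; through `cosh 2r = 1 + 2 sinh² r` it becomes
a termwise comparison of the series of `cosh` with a geometric series, via `12^k ≤ 6 (2k)!`.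
-/

open Real Filter Set Topology
open scoped Nat

theorem twelve_pow_le_six_mul_factorial_two_mul : ∀ n : ℕ, 12 ^ n ≤ 6 * (2 * n)!
  | 0 => by norm_num
  | 1 => by norm_num [Nat.factorial]
  | n + 2 => by
    have ih := twelve_pow_le_six_mul_factorial_two_mul (n + 1)
    have h12 : 12 ≤ (2 * n + 4) * (2 * n + 3) := by nlinarith
    rw [show 2 * (n + 2) = 2 * (n + 1) + 1 + 1 by ring, Nat.factorial_succ, Nat.factorial_succ]
    calc 12 ^ (n + 2) = 12 * 12 ^ (n + 1) := by ring
      _ ≤ (2 * n + 4) * (2 * n + 3) * (6 * (2 * (n + 1))!) := Nat.mul_le_mul h12 ih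
      _ = _ := by ring

namespace Real

theorem cosh_mul_twelve_sub_sq_le {x : ℝ} (hx : x ^ 2 < 12) :
    cosh x * (12 - x ^ 2) ≤ 12 + 5 * x ^ 2 := by
  set q := x ^ 2 / 12
  have hq0 : 0 ≤ q := by positivity
  have hq1 : q < 1 := by simp only [q]; linarith
  have hgeom := ((hasSum_geometric_of_lt_one hq0 hq1).mul_left 6).sub
    (hasSum_ite_eq 0 (5 : ℝ))
  have hle : cosh x ≤ 6 * (1 - q)⁻¹ - 5 := by
    refine hasSum_le (fun n => ?_) (hasSum_cosh x) hgeom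
    rcases n with _ | n
    · norm_num
    · have hfact : (12 : ℝ) ^ (n + 1) ≤ 6 * ((2 * (n + 1))! : ℝ) := by
        exact_mod_cast twelve_pow_le_six_mul_factorial_two_mul (n + 1)
      rw [if_neg n.succ_ne_zero, sub_zero, pow_mul, div_pow, div_le_iff₀ (by positivity)]
      calc (x ^ 2) ^ (n + 1) = (x ^ 2) ^ (n + 1) / 12 ^ (n + 1) * 12 ^ (n + 1) := by
            field_simp
        _ ≤ (x ^ 2) ^ (n + 1) / 12 ^ (n + 1) * (6 * ((2 * (n + 1))! : ℝ)) := by gcongr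
        _ = _ := by ring
  have h1q : 12 - x ^ 2 = 12 * (1 - q) := by simp only [q]; ring
  rw [h1q]
  have : 0 < 1 - q := by linarith
  calc cosh x * (12 * (1 - q)) ≤ (6 * (1 - q)⁻¹ - 5) * (12 * (1 - q)) := by gcongr
    _ = 12 + 5 * x ^ 2 := by field_simp; simp only [q]; ring

theorem one_add_sq_div_two_add_pow_four_div_le_cosh (x : ℝ) :
    1 + x ^ 2 / 2 + x ^ 4 / 24 ≤ cosh x := by
  have h := sum_le_hasSum (Finset.range 3) (fun n _ => by rw [pow_mul]; positivity) (hasSum_cosh x)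
  norm_num [Finset.sum_range_succ, Nat.factorial] at h
  linarith

theorem sinh_sq_mul_three_sub_sq_le (r : ℝ) : sinh r ^ 2 * (3 - r ^ 2) ≤ 3 * r ^ 2 := by
  rcases le_or_gt 3 (r ^ 2) with hr | hr
  · nlinarith [sq_nonneg (sinh r)]
  · have h := cosh_mul_twelve_sub_sq_le (x := 2 * r) (by nlinarith)
    rw [cosh_two_mul, cosh_sq] at h
    nlinarith

theorem sq_add_pow_four_div_three_le_sinh_sq (r : ℝ) : r ^ 2 + r ^ 4 / 3 ≤ sinh r ^ 2 := by
  have h := one_add_sq_div_two_add_pow_four_div_le_cosh (2 * r)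
  rw [cosh_two_mul, cosh_sq] at h
  nlinarith

end Real

noncomputable def invSqSubInvSinhSq (r : ℝ) : ℝ := 1 / r ^ 2 - 1 / sinh r ^ 2

section invSqSubInvSinhSq

variable {r : ℝ}

theorem invSqSubInvSinhSq_nonneg (hr : 0 < r) : 0 ≤ invSqSubInvSinhSq r := by
  have hs : r ^ 2 ≤ sinh r ^ 2 := pow_le_pow_left₀ hr.le (self_le_sinh_iff.2 hr.le) 2
  exact sub_nonneg.2 (one_div_le_one_div_of_le (by positivity) hs)

theorem invSqSubInvSinhSq_le_one_div_sq (hr : 0 < r) : invSqSubInvSinhSq r ≤ 1 / r ^ 2 := by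
  have : 0 ≤ 1 / sinh r ^ 2 := by positivity
  unfold invSqSubInvSinhSq
  linarith

theorem invSqSubInvSinhSq_eq (hr : 0 < r) :
    invSqSubInvSinhSq r = (sinh r ^ 2 - r ^ 2) / (r ^ 2 * sinh r ^ 2) := by
  have : sinh r ≠ 0 := (sinh_pos_iff.2 hr).ne'
  unfold invSqSubInvSinhSq
  field_simp

theorem invSqSubInvSinhSq_le_one_third (hr : 0 < r) : invSqSubInvSinhSq r ≤ 1 / 3 := by
  have hs : 0 < sinh r := sinh_pos_iff.2 hr
  rw [invSqSubInvSinhSq_eq hr, div_le_iff₀ (by positivity)]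
  nlinarith [sinh_sq_mul_three_sub_sq_le r]

theorem three_sub_sq_div_nine_le_invSqSubInvSinhSq (hr : 0 < r) :
    (3 - r ^ 2) / 9 ≤ invSqSubInvSinhSq r := by
  have hs : 0 < sinh r := sinh_pos_iff.2 hr
  rw [invSqSubInvSinhSq_eq hr, le_div_iff₀ (by positivity)]
  nlinarith [sinh_sq_mul_three_sub_sq_le r, sq_add_pow_four_div_three_le_sinh_sq r]

end invSqSubInvSinhSq

theorem ciSup_subtype_eq_of_tendsto {α β : Type*} [ConditionallyCompleteLinearOrder β]
    [TopologicalSpace β] [ClosedIicTopology β] {f : α → β} {s : Set α} {l : Filter α} [l.NeBot]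
    {a : β} (hs : ∀ᶠ x in l, x ∈ s) (hle : ∀ x ∈ s, f x ≤ a) (ht : Tendsto f l (𝓝 a)) :
    ⨆ x : s, f x = a := by
  obtain ⟨x₀, hx₀⟩ := hs.exists
  have : Nonempty s := ⟨⟨x₀, hx₀⟩⟩
  refine IsLUB.ciSup_eq ⟨?_, fun b hb => le_of_tendsto ht ?_⟩
  · rintro _ ⟨⟨x, hx⟩, rfl⟩
    exact hle x hx
  · filter_upwards [hs] with x hx using hb ⟨⟨x, hx⟩, rfl⟩

theorem ciInf_subtype_eq_of_tendsto {α β : Type*} [ConditionallyCompleteLinearOrder β]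
    [TopologicalSpace β] [ClosedIciTopology β] {f : α → β} {s : Set α} {l : Filter α} [l.NeBot]
    {a : β} (hs : ∀ᶠ x in l, x ∈ s) (hle : ∀ x ∈ s, a ≤ f x) (ht : Tendsto f l (𝓝 a)) :
    ⨅ x : s, f x = a :=
  ciSup_subtype_eq_of_tendsto (β := βᵒᵈ) hs hle ht

theorem tendsto_invSqSubInvSinhSq_atTop : Tendsto invSqSubInvSinhSq atTop (𝓝 0) := by
  have h : Tendsto (fun r : ℝ => 1 / r ^ 2) atTop (𝓝 0) := by
    simpa only [Function.comp_def, one_div] using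
      tendsto_inv_atTop_zero.comp (tendsto_pow_atTop (α := ℝ) two_ne_zero)
  refine tendsto_of_tendsto_of_tendsto_of_le_of_le' tendsto_const_nhds h ?_ ?_
  · filter_upwards [eventually_gt_atTop 0] with r hr using invSqSubInvSinhSq_nonneg hr
  · filter_upwards [eventually_gt_atTop 0] with r hr using invSqSubInvSinhSq_le_one_div_sq hr

theorem tendsto_invSqSubInvSinhSq_nhdsGT_zero :
    Tendsto invSqSubInvSinhSq (𝓝[>] 0) (𝓝 (1 / 3)) := by
  have h : Tendsto (fun r : ℝ => (3 - r ^ 2) / 9) (𝓝[>] 0) (𝓝 (1 / 3)) :=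
    (((continuous_const.sub (continuous_pow 2)).div_const 9).tendsto' 0 (1 / 3)
      (by norm_num)).mono_left nhdsWithin_le_nhds
  refine tendsto_of_tendsto_of_tendsto_of_le_of_le' h tendsto_const_nhds ?_ ?_
  · filter_upwards [self_mem_nhdsWithin] with r hr
      using three_sub_sq_div_nine_le_invSqSubInvSinhSq hr
  · filter_upwards [self_mem_nhdsWithin] with r hr using invSqSubInvSinhSq_le_one_third hr

theorem iSup_invSqSubInvSinhSq : ⨆ r : Ioi (0 : ℝ), invSqSubInvSinhSq r = 1 / 3 :=
  ciSup_subtype_eq_of_tendsto (l := 𝓝[>] 0) self_mem_nhdsWithin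
    (fun _ hr => invSqSubInvSinhSq_le_one_third hr) tendsto_invSqSubInvSinhSq_nhdsGT_zero

theorem iInf_invSqSubInvSinhSq : ⨅ r : Ioi (0 : ℝ), invSqSubInvSinhSq r = 0 :=
  ciInf_subtype_eq_of_tendsto (eventually_gt_atTop 0) (fun _ hr => invSqSubInvSinhSq_nonneg hr)
    tendsto_invSqSubInvSinhSq_atTop

theorem bddAbove_range_invSqSubInvSinhSq :
    BddAbove (range fun r : Ioi (0 : ℝ) => invSqSubInvSinhSq r) :=
  ⟨1 / 3, by rintro _ ⟨⟨r, hr⟩, rfl⟩; exact invSqSubInvSinhSq_le_one_third hr⟩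

theorem bddBelow_range_invSqSubInvSinhSq :
    BddBelow (range fun r : Ioi (0 : ℝ) => invSqSubInvSinhSq r) :=
  ⟨0, by rintro _ ⟨⟨r, hr⟩, rfl⟩; exact invSqSubInvSinhSq_nonneg hr⟩

-- `Φ` of the statement, with the dimension `n` as a real parameter.
noncomputable def vanVleckPotential (n r : ℝ) : ℝ :=
  -((n - 1) / (4 * r ^ 2)) * ((n - 3) * (1 - r ^ 2 * (cosh r / sinh r) ^ 2) - 2 * r ^ 2)

section vanVleckPotential

variable {n : ℝ}

theorem vanVleckPotential_eq {r : ℝ} (hr : 0 < r) :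
    vanVleckPotential n r = (n - 1) / 4 * (n - 1 - (n - 3) * invSqSubInvSinhSq r) := by
  have hs : sinh r ≠ 0 := (sinh_pos_iff.2 hr).ne'
  unfold vanVleckPotential invSqSubInvSinhSq
  rw [div_pow, cosh_sq]
  field_simp
  ring

theorem vanVleckPotential_comp_coe :
    (fun r : Ioi (0 : ℝ) => vanVleckPotential n r) =
      fun r : Ioi (0 : ℝ) => (n - 1) / 4 * (n - 1 - (n - 3) * invSqSubInvSinhSq r) :=
  funext fun r => vanVleckPotential_eq r.2

theorem monotone_affine_of_le_three (h1 : 1 ≤ n) (h3 : n ≤ 3) :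
    Monotone fun q : ℝ => (n - 1) / 4 * (n - 1 - (n - 3) * q) :=
  fun a b hab => by nlinarith [mul_nonneg (sub_nonneg.2 h1) (sub_nonneg.2 h3)]

theorem antitone_affine_of_three_le (h3 : 3 ≤ n) :
    Antitone fun q : ℝ => (n - 1) / 4 * (n - 1 - (n - 3) * q) :=
  fun a b hab => by nlinarith [mul_nonneg (by linarith : (0 : ℝ) ≤ n - 1) (sub_nonneg.2 h3)]

theorem iSup_vanVleckPotential_of_le_three (h1 : 1 ≤ n) (h3 : n ≤ 3) :
    ⨆ r : Ioi (0 : ℝ), vanVleckPotential n r = (n - 1) / 4 * (n - 1 - (n - 3) / 3) := by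
  rw [vanVleckPotential_comp_coe,
    ← (monotone_affine_of_le_three h1 h3).map_ciSup_of_continuousAt (by fun_prop)
      bddAbove_range_invSqSubInvSinhSq, iSup_invSqSubInvSinhSq]
  ring

theorem iInf_vanVleckPotential_of_le_three (h1 : 1 ≤ n) (h3 : n ≤ 3) :
    ⨅ r : Ioi (0 : ℝ), vanVleckPotential n r = (n - 1) ^ 2 / 4 := by
  rw [vanVleckPotential_comp_coe,
    ← (monotone_affine_of_le_three h1 h3).map_ciInf_of_continuousAt (by fun_prop)
      bddBelow_range_invSqSubInvSinhSq, iInf_invSqSubInvSinhSq]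
  ring

theorem iSup_vanVleckPotential_of_three_le (h3 : 3 ≤ n) :
    ⨆ r : Ioi (0 : ℝ), vanVleckPotential n r = (n - 1) ^ 2 / 4 := by
  rw [vanVleckPotential_comp_coe,
    ← (antitone_affine_of_three_le h3).map_ciInf_of_continuousAt (by fun_prop)
      bddBelow_range_invSqSubInvSinhSq, iInf_invSqSubInvSinhSq]
  ring

theorem iInf_vanVleckPotential_of_three_le (h3 : 3 ≤ n) :
    ⨅ r : Ioi (0 : ℝ), vanVleckPotential n r = (n - 1) / 4 * (n - 1 - (n - 3) / 3) := by
  rw [vanVleckPotential_comp_coe,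
    ← (antitone_affine_of_three_le h3).map_ciSup_of_continuousAt (by fun_prop)
      bddAbove_range_invSqSubInvSinhSq, iSup_invSqSubInvSinhSq]
  ring

theorem vanVleckPotential_three {r : ℝ} (hr : 0 < r) : vanVleckPotential 3 r = 1 := by
  rw [vanVleckPotential_eq hr]
  norm_num

end vanVleckPotential

theorem stmt_14_general (n : ℕ) :
    let Φ : ℝ → ℝ := fun r =>
      -(((n : ℝ) - 1) / (4 * r ^ 2)) *
        (((n : ℝ) - 3) * (1 - r ^ 2 * (Real.cosh r / Real.sinh r) ^ 2) - 2 * r ^ 2)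
    (n = 2 → (⨆ r : Set.Ioi (0:ℝ), Φ r) = 1/3 ∧ (⨅ r : Set.Ioi (0:ℝ), Φ r) = 1/4) ∧
    (n = 3 → ∀ r > (0:ℝ), Φ r = 1) ∧
    (3 < n → (⨆ r : Set.Ioi (0:ℝ), Φ r) = ((n : ℝ) - 1) ^ 2 / 4 ∧
      (⨅ r : Set.Ioi (0:ℝ), Φ r) = (n : ℝ) * ((n : ℝ) - 1) / 6) := by
  intro Φ
  have hΦ : Φ = vanVleckPotential n := rfl
  rw [hΦ]
  refine ⟨?_, ?_, fun hn => ?_⟩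
  · rintro rfl
    rw [iSup_vanVleckPotential_of_le_three (by norm_num) (by norm_num),
      iInf_vanVleckPotential_of_le_three (by norm_num) (by norm_num)]
    norm_num
  · rintro rfl r hr
    exact_mod_cast vanVleckPotential_three hr
  · have hn' : (3 : ℝ) ≤ n := by exact_mod_cast hn.le
    rw [iSup_vanVleckPotential_of_three_le hn', iInf_vanVleckPotential_of_three_le hn']
    constructor <;> ring

theorem stmt_14 (n : ℕ) (hn : 2 ≤ n) :
    let Φ : ℝ → ℝ := fun r =>
      -(((n : ℝ) - 1) / (4 * r ^ 2)) *
        (((n : ℝ) - 3) * (1 - r ^ 2 * (Real.cosh r / Real.sinh r) ^ 2) - 2 * r ^ 2)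
    (n = 2 → (⨆ r : Set.Ioi (0:ℝ), Φ r) = 1/3 ∧ (⨅ r : Set.Ioi (0:ℝ), Φ r) = 1/4) ∧
    (n = 3 → ∀ r > (0:ℝ), Φ r = 1) ∧
    (3 < n → (⨆ r : Set.Ioi (0:ℝ), Φ r) = ((n : ℝ) - 1) ^ 2 / 4 ∧
      (⨅ r : Set.Ioi (0:ℝ), Φ r) = (n : ℝ) * ((n : ℝ) - 1) / 6) :=
  stmt_14_general n
end

section
/- The first DeWitt heat kernel coefficient on H^n is b₁(r) = ((n−1)/4)[(n−3)(1/r² − coth(r)/r) + n − 1], which is the unique solution of (1 + r ∂_r) b₁(r) = 𝒩·1 with 𝒩·1 = −Φ(r) where Φ(r) = −((n−1)/(4r²))[(n−3)(1 − r² coth² r) − 2r²]; moreover lim_{r→0⁺} b₁(r) = n(n−1)/6. -/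
/-!
Since `(1 + r ∂ᵣ) b = ∂ᵣ (r b)`, the equation is checked by differentiating `b₁` with
`coth' = 1 - coth²`, and two solutions on `(0, ∞)` differ by `C / r`, which is bounded at `0⁺`
only for `C = 0`. The limit comes from `1 / r² - coth r / r = (sinh r - r cosh r) / r³ · r / sinh r`
and one application of l'Hôpital's rule: `(sinh r - r cosh r) / r³ → -1/3`.
-/

open Real Filter Set Topology

lemma hasDerivAt_cosh_div_sinh {r : ℝ} (hr : r ≠ 0) :
    HasDerivAt (fun x => cosh x / sinh x) (1 - (cosh r / sinh r) ^ 2) r := by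
  have hs : sinh r ≠ 0 := sinh_ne_zero.mpr hr
  refine ((hasDerivAt_cosh r).div (hasDerivAt_sinh r) hs).congr_deriv ?_
  rw [div_pow, one_sub_div (pow_ne_zero 2 hs)]
  ring

lemma tendsto_sinh_div_self_nhdsGT_zero : Tendsto (fun x => sinh x / x) (𝓝[>] 0) (𝓝 1) := by
  simpa [div_eq_inv_mul] using (hasDerivAt_sinh 0).tendsto_slope_zero_right

lemma tendsto_sinh_sub_mul_cosh_div_cube_nhdsGT_zero :
    Tendsto (fun r => (sinh r - r * cosh r) / r ^ 3) (𝓝[>] 0) (𝓝 (-(1 / 3))) := by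
  have hcont : Continuous fun x => sinh x - x * cosh x := by fun_prop
  refine HasDerivAt.lhopital_zero_right_on_Ioo (f' := fun x => -(x * sinh x))
    (g' := fun x => 3 * x ^ 2) one_pos (fun x _ => ?_) (fun x _ => ?_) (fun x hx => ?_) ?_ ?_ ?_
  · exact ((hasDerivAt_sinh x).sub ((hasDerivAt_id x).mul (hasDerivAt_cosh x))).congr_deriv
      (by simp only [id]; ring)
  · simpa using hasDerivAt_pow 3 x
  · have : 0 < x := hx.1
    positivity
  · simpa using (hcont.tendsto 0).mono_left nhdsWithin_le_nhds
  · simpa using ((continuous_pow 3).tendsto (0 : ℝ)).mono_left nhdsWithin_le_nhds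
  · refine ((tendsto_sinh_div_self_nhdsGT_zero.neg).div_const 3).congr' ?_ |>.trans (by norm_num)
    filter_upwards [self_mem_nhdsWithin] with x hx
    field_simp [(mem_Ioi.mp hx).ne']

lemma tendsto_inv_sq_sub_coth_div_self_nhdsGT_zero :
    Tendsto (fun r => 1 / r ^ 2 - cosh r / sinh r / r) (𝓝[>] 0) (𝓝 (-(1 / 3))) := by
  have hinv : Tendsto (fun r => r / sinh r) (𝓝[>] 0) (𝓝 1) := by
    simpa using tendsto_sinh_div_self_nhdsGT_zero.inv₀ one_ne_zero
  refine (tendsto_sinh_sub_mul_cosh_div_cube_nhdsGT_zero.mul hinv).congr' ?_ |>.trans (by norm_num)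
  filter_upwards [self_mem_nhdsWithin] with r hr
  have hr : 0 < r := hr
  field_simp [hr.ne', (sinh_pos_iff.mpr hr).ne']

noncomputable def deWittB1 (n r : ℝ) : ℝ :=
  (n - 1) / 4 * ((n - 3) * (1 / r ^ 2 - cosh r / sinh r / r) + n - 1)

noncomputable def deWittPhi (n r : ℝ) : ℝ :=
  -((n - 1) / (4 * r ^ 2)) * ((n - 3) * (1 - r ^ 2 * (cosh r / sinh r) ^ 2) - 2 * r ^ 2)

lemma hasDerivAt_deWittB1 (n : ℝ) {r : ℝ} (hr : r ≠ 0) :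
    HasDerivAt (deWittB1 n) ((n - 1) / 4 * ((n - 3) *
      (-2 / r ^ 3 - ((1 - (cosh r / sinh r) ^ 2) * r - cosh r / sinh r) / r ^ 2))) r := by
  have hinv : HasDerivAt (fun x : ℝ => 1 / x ^ 2) (-2 / r ^ 3) r := by
    simp only [one_div]
    refine ((hasDerivAt_pow 2 r).fun_inv (pow_ne_zero 2 hr)).congr_deriv ?_
    field_simp
    norm_num [mul_comm]
  have hcoth := (hasDerivAt_cosh_div_sinh hr).div (hasDerivAt_id r) hr
  exact ((((hinv.sub hcoth).const_mul (n - 3)).add_const n |>.sub_const 1).const_mul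
    ((n - 1) / 4)).congr_deriv (by simp only [id, mul_one])

lemma deWittB1_add_mul_deriv (n : ℝ) {r : ℝ} (hr : r ≠ 0) :
    deWittB1 n r + r * deriv (deWittB1 n) r = deWittPhi n r := by
  have hs : sinh r ≠ 0 := sinh_ne_zero.mpr hr
  rw [(hasDerivAt_deWittB1 n hr).deriv, deWittB1, deWittPhi]
  field_simp
  ring

lemma tendsto_deWittB1_nhdsGT_zero (n : ℝ) :
    Tendsto (deWittB1 n) (𝓝[>] 0) (𝓝 (n * (n - 1) / 6)) := by
  rw [show n * (n - 1) / 6 = (n - 1) / 4 * ((n - 3) * -(1 / 3) + n - 1) by ring]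
  exact ((tendsto_inv_sq_sub_coth_div_self_nhdsGT_zero.const_mul (n - 3)).add_const n
    |>.sub_const 1).const_mul ((n - 1) / 4)

lemma eq_of_add_mul_deriv_eq {f g : ℝ → ℝ}
    (hf : ∀ r > 0, DifferentiableAt ℝ f r) (hg : ∀ r > 0, DifferentiableAt ℝ g r)
    (hfg : ∀ r > 0, f r + r * deriv f r = g r + r * deriv g r)
    (hfb : IsBoundedUnder (· ≤ ·) (𝓝[>] 0) (norm ∘ f))
    (hgb : IsBoundedUnder (· ≤ ·) (𝓝[>] 0) (norm ∘ g)) {r : ℝ} (hr : 0 < r) :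
    f r = g r := by
  set u : ℝ → ℝ := fun x => x * f x - x * g x
  have hu : ∀ x > 0, HasDerivAt u 0 x := fun x hx => by
    refine (((hasDerivAt_id' x).mul (hf x hx).hasDerivAt).sub
      ((hasDerivAt_id' x).mul (hg x hx).hasDerivAt)).congr_deriv ?_
    linarith [hfg x hx]
  have hconst : ∀ x > 0, u x = u r := fun x hx =>
    isOpen_Ioi.is_const_of_deriv_eq_zero isPreconnected_Ioi
      (fun y hy => (hu y hy).differentiableAt.differentiableWithinAt) (fun y hy => (hu y hy).deriv)
      hx hr
  have hid : Tendsto (fun x : ℝ => x) (𝓝[>] 0) (𝓝 0) := tendsto_nhdsWithin_of_tendsto_nhds tendsto_id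
  have hlim : Tendsto u (𝓝[>] 0) (𝓝 0) := by
    simpa using (hid.zero_mul_isBoundedUnder_le hfb).sub (hid.zero_mul_isBoundedUnder_le hgb)
  have hlim_const : Tendsto u (𝓝[>] (0:ℝ)) (𝓝 (u r)) :=
    tendsto_const_nhds.congr' <| eventually_nhdsWithin_of_forall fun x hx => (hconst x hx).symm
  have hur : u r = 0 := tendsto_nhds_unique hlim_const hlim
  exact mul_left_cancel₀ hr.ne' (sub_eq_zero.mp hur)

theorem stmt_17_general (n : ℕ) :
    let Φ : ℝ → ℝ := fun r =>
      -(((n : ℝ) - 1) / (4 * r ^ 2)) *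
        (((n : ℝ) - 3) * (1 - r ^ 2 * (Real.cosh r / Real.sinh r) ^ 2) - 2 * r ^ 2)
    let b₁ : ℝ → ℝ := fun r =>
      (((n : ℝ) - 1) / 4) *
        (((n : ℝ) - 3) * (1 / r ^ 2 - (Real.cosh r / Real.sinh r) / r) + (n : ℝ) - 1)
    (∀ r > (0:ℝ), b₁ r + r * deriv b₁ r = Φ r) ∧
    (∀ c : ℝ → ℝ, (∀ r > (0:ℝ), DifferentiableAt ℝ c r) →
      (∀ r > (0:ℝ), c r + r * deriv c r = Φ r) →
      (∃ M : ℝ, ∀ r ∈ Set.Ioo (0:ℝ) 1, |c r| ≤ M) →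
      ∀ r > (0:ℝ), c r = b₁ r) ∧
    Filter.Tendsto b₁ (nhdsWithin 0 (Set.Ioi 0))
      (nhds ((n : ℝ) * ((n : ℝ) - 1) / 6)) := by
  intro Φ b₁
  have hb₁ : ∀ r > (0:ℝ), b₁ r + r * deriv b₁ r = Φ r := fun r hr =>
    deWittB1_add_mul_deriv n hr.ne'
  refine ⟨hb₁, fun c hc hcΦ ⟨M, hM⟩ r hr => ?_, tendsto_deWittB1_nhdsGT_zero n⟩
  have hcb : IsBoundedUnder (· ≤ ·) (𝓝[>] 0) (norm ∘ c) :=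
    isBoundedUnder_of_eventually_le (a := M) <|
      eventually_of_mem (Ioo_mem_nhdsGT one_pos) hM
  exact eq_of_add_mul_deriv_eq hc (fun x hx => (hasDerivAt_deWittB1 n hx.ne').differentiableAt)
    (fun x hx => (hcΦ x hx).trans (hb₁ x hx).symm) hcb
    (tendsto_deWittB1_nhdsGT_zero n).norm.isBoundedUnder_le hr

theorem stmt_17 (n : ℕ) (hn : 2 ≤ n) :
    let Φ : ℝ → ℝ := fun r =>
      -(((n : ℝ) - 1) / (4 * r ^ 2)) *
        (((n : ℝ) - 3) * (1 - r ^ 2 * (Real.cosh r / Real.sinh r) ^ 2) - 2 * r ^ 2)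
    let b₁ : ℝ → ℝ := fun r =>
      (((n : ℝ) - 1) / 4) *
        (((n : ℝ) - 3) * (1 / r ^ 2 - (Real.cosh r / Real.sinh r) / r) + (n : ℝ) - 1)
    (∀ r > (0:ℝ), b₁ r + r * deriv b₁ r = Φ r) ∧
    (∀ c : ℝ → ℝ, (∀ r > (0:ℝ), DifferentiableAt ℝ c r) →
      (∀ r > (0:ℝ), c r + r * deriv c r = Φ r) →
      (∃ M : ℝ, ∀ r ∈ Set.Ioo (0:ℝ) 1, |c r| ≤ M) →
      ∀ r > (0:ℝ), c r = b₁ r) ∧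
    Filter.Tendsto b₁ (nhdsWithin 0 (Set.Ioi 0))
      (nhds ((n : ℝ) * ((n : ℝ) - 1) / 6)) :=
  stmt_17_general n
end
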